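/- arXiv:1504.04467 — 2 statements merged into one kernel-verified Lean document; each statement's English description precedes it below -/
import Mathlib

section
/- Let m ≥ 2 be a natural number, let a_2, …, a_m be real numbers, and let r, s be real numbers with s ≥ r > 1. Then Σ_{k=2}^m a_k·∫_r^s x/(log x)^k dx = t_{m-1,1}·∫_r^s x/(log x)² dx − Σ_{k=2}^{m-1} t_{m-1,k}·( s²/(log s)^k − r²/(log r)^k ), where t_{i,j} := (j-1)!·Σ_{l=j}^{i} 2^{l-j}·a_{l+1}/l!. -/
open Filter Asymptotics

/-- `nthPrime n` is the `n`-th prime number, with `nthPrime 1 = 2`. -/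
noncomputable def nthPrime (n : ℕ) : ℕ := Nat.nth Nat.Prime (n - 1)

/-- `Cseq n = n * p_n - ∑_{k ≤ n} p_k`. -/
noncomputable def Cseq (n : ℕ) : ℝ := n * nthPrime n - ∑ k ∈ Finset.Icc 1 n, (nthPrime k : ℝ)

/-- `primePi x` is the number of primes not exceeding the real number `x`. -/
noncomputable def primePi (x : ℝ) : ℕ := Nat.primeCounting ⌊x⌋₊

/-- `li x = ∫_2^x dt / log t`. -/
noncomputable def li (x : ℝ) : ℝ := ∫ t in (2:ℝ)..x, 1 / Real.log t

/-!
Write `I k = ∫_r^s x / (log x)^k dx` and `B k = s²/(log s)^k - r²/(log r)^k`. Integrating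
`d/dx (x² / (log x)^k) = 2x/(log x)^k - k x/(log x)^(k+1)` gives `k I (k+1) = 2 I k - B k`, which
unrolls to `l! I (l+1) = 2^(l-1) I 2 - ∑_{j=2}^{l} (j-1)! 2^(l-j) B j` for `l ≥ 1`. Substituting
this into `∑_k a k I k` and exchanging the two sums produces the coefficients `t (m-1) j`.
-/

open Finset Real
open scoped Nat

theorem hasDerivAt_sq_div_log_pow {x : ℝ} (hx : log x ≠ 0) (k : ℕ) :
    HasDerivAt (fun x => x ^ 2 / log x ^ k)
      (2 * (x / log x ^ k) - k * (x / log x ^ (k + 1))) x := by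
  have hx0 : x ≠ 0 := by rintro rfl; simp at hx
  refine ((hasDerivAt_pow 2 x).div ((hasDerivAt_log hx0).fun_pow k)
    (pow_ne_zero k hx)).congr_deriv ?_
  rcases k with _ | k
  · simp
  · simp only [Nat.add_sub_cancel]
    field_simp
    push_cast
    ring

theorem integral_div_log_pow_recurrence {r s : ℝ} (hr : 1 < r) (hs : r ≤ s) (k : ℕ) :
    (k : ℝ) * ∫ x in r..s, x / log x ^ (k + 1) =
      2 * (∫ x in r..s, x / log x ^ k) - (s ^ 2 / log s ^ k - r ^ 2 / log r ^ k) := by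
  have hlog : ∀ x ∈ Set.uIcc r s, log x ≠ 0 := fun x hx =>
    (log_pos (hr.trans_le (Set.uIcc_of_le hs ▸ hx).1)).ne'
  have hint : ∀ n : ℕ, IntervalIntegrable (fun x => x / log x ^ n) MeasureTheory.volume r s :=
    fun n => ContinuousOn.intervalIntegrable <| continuousOn_id.div
      ((continuousOn_log.mono fun x hx h0 => hlog x hx (by simp_all)).pow n)
      fun x hx => pow_ne_zero n (hlog x hx)
  have hFTC := intervalIntegral.integral_eq_sub_of_hasDerivAt
    (fun x hx => hasDerivAt_sq_div_log_pow (hlog x hx) k)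
    (((hint k).const_mul 2).sub ((hint (k + 1)).const_mul k))
  rw [intervalIntegral.integral_sub ((hint k).const_mul 2) ((hint (k + 1)).const_mul k),
    intervalIntegral.integral_const_mul, intervalIntegral.integral_const_mul] at hFTC
  linarith

theorem factorial_mul_eq_of_recurrence {R : Type*} [CommRing R] {I B : ℕ → R}
    (h : ∀ k : ℕ, (k : R) * I (k + 1) = 2 * I k - B k) {l : ℕ} (hl : 1 ≤ l) :
    (l ! : R) * I (l + 1) =
      2 ^ (l - 1) * I 2 - ∑ j ∈ Icc 2 l, ((j - 1)! : R) * 2 ^ (l - j) * B j := by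
  induction l, hl using Nat.le_induction with
  | base => simp
  | succ l hl ih =>
    have hsum : ∑ j ∈ Icc 2 l, ((j - 1)! : R) * 2 ^ (l + 1 - j) * B j
        = 2 * ∑ j ∈ Icc 2 l, ((j - 1)! : R) * 2 ^ (l - j) * B j := by
      rw [mul_sum]
      refine sum_congr rfl fun j hj => ?_
      rw [Nat.sub_add_comm (mem_Icc.1 hj).2, pow_succ]
      ring
    have hpow : (2 : R) ^ l = 2 * 2 ^ (l - 1) := by rw [← pow_succ', Nat.sub_add_cancel hl]
    rw [sum_Icc_succ_top (by omega), hsum, Nat.factorial_succ, Nat.add_sub_cancel, Nat.sub_self,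
      hpow, Nat.cast_mul]
    linear_combination (l ! : R) * h (l + 1) + 2 * ih

section Recurrence

variable {K : Type*} [Field K]

def recurrenceCoeff (a : ℕ → K) (i j : ℕ) : K :=
  ((j - 1).factorial : K) * ∑ l ∈ Icc j i, 2 ^ (l - j) * a (l + 1) / (l.factorial : K)

theorem sum_mul_eq_of_recurrence [CharZero K] {I B : ℕ → K}
    (h : ∀ k : ℕ, (k : K) * I (k + 1) = 2 * I k - B k) (a : ℕ → K) (m : ℕ) :
    ∑ k ∈ Icc 2 m, a k * I k =
      recurrenceCoeff a (m - 1) 1 * I 2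
        - ∑ k ∈ Icc 2 (m - 1), recurrenceCoeff a (m - 1) k * B k := by
  have hshift : ∑ k ∈ Icc 2 m, a k * I k = ∑ l ∈ Icc 1 (m - 1), a (l + 1) * I (l + 1) :=
    sum_nbij' (· - 1) (· + 1) (fun k hk => by simp only [mem_Icc] at hk ⊢; omega)
      (fun l hl => by simp only [mem_Icc] at hl ⊢; omega)
      (fun k hk => by simp only [mem_Icc] at hk; omega) (fun l _ => rfl)
      (fun k hk => by simp only [mem_Icc] at hk; rw [Nat.sub_add_cancel (by omega)])
  have hclosed : ∀ l ∈ Icc 1 (m - 1), a (l + 1) * I (l + 1) =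
      a (l + 1) / l ! * (2 ^ (l - 1) * I 2
        - ∑ j ∈ Icc 2 l, ((j - 1)! : K) * 2 ^ (l - j) * B j) := by
    intro l hl
    rw [← factorial_mul_eq_of_recurrence h (mem_Icc.1 hl).1, ← mul_assoc,
      div_mul_cancel₀ _ (Nat.cast_ne_zero.2 l.factorial_ne_zero)]
  have hswap :
      ∑ l ∈ Icc 1 (m - 1), ∑ j ∈ Icc 2 l, a (l + 1) / l ! * (((j - 1)! : K) * 2 ^ (l - j) * B j)
        = ∑ j ∈ Icc 2 (m - 1), ∑ l ∈ Icc j (m - 1),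
            a (l + 1) / l ! * (((j - 1)! : K) * 2 ^ (l - j) * B j) :=
    sum_comm' fun l j => by simp only [mem_Icc]; omega
  rw [hshift, sum_congr rfl hclosed]
  simp only [mul_sub, sum_sub_distrib, mul_sum, hswap, recurrenceCoeff, sum_mul]
  congr 1
  · exact sum_congr rfl fun l _ => by rw [Nat.sub_self, Nat.factorial_zero, Nat.cast_one]; ring
  · exact sum_congr rfl fun j _ => sum_congr rfl fun l _ => by ring

end Recurrence

theorem sum_integral_div_log_pow_general (m : ℕ) (a : ℕ → ℝ) (r s : ℝ)
    (hr : 1 < r) (hs : r ≤ s) (t : ℕ → ℕ → ℝ)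
    (ht : ∀ i j, t i j = ((j - 1).factorial : ℝ) *
        ∑ l ∈ Finset.Icc j i, 2 ^ (l - j) * a (l + 1) / (l.factorial : ℝ)) :
    ∑ k ∈ Finset.Icc 2 m, a k * ∫ x in r..s, x / Real.log x ^ k =
      t (m - 1) 1 * (∫ x in r..s, x / Real.log x ^ 2)
        - ∑ k ∈ Finset.Icc 2 (m - 1), t (m - 1) k
            * (s ^ 2 / Real.log s ^ k - r ^ 2 / Real.log r ^ k) := by
  obtain rfl : t = recurrenceCoeff a := funext fun i => funext (ht i)
  exact sum_mul_eq_of_recurrence (integral_div_log_pow_recurrence hr hs) a m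

theorem sum_integral_div_log_pow (m : ℕ) (hm : 2 ≤ m) (a : ℕ → ℝ) (r s : ℝ)
    (hr : 1 < r) (hs : r ≤ s) (t : ℕ → ℕ → ℝ)
    (ht : ∀ i j, t i j = ((j - 1).factorial : ℝ) *
        ∑ l ∈ Finset.Icc j i, 2 ^ (l - j) * a (l + 1) / (l.factorial : ℝ)) :
    ∑ k ∈ Finset.Icc 2 m, a k * ∫ x in r..s, x / Real.log x ^ k =
      t (m - 1) 1 * (∫ x in r..s, x / Real.log x ^ 2)
        - ∑ k ∈ Finset.Icc 2 (m - 1), t (m - 1) k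
            * (s ^ 2 / Real.log s ^ k - r ^ 2 / Real.log r ^ k) :=
  sum_integral_div_log_pow_general m a r s hr hs t ht
end

section
/- For every real number x ≥ 10^18, ∫_2^x dt/log t ≤ x/log x + x/(log x)² + 2x/(log x)³ + 6x/(log x)⁴ + 24x/(log x)⁵ + 120x/(log x)⁶ + 720x/(log x)⁷ + 6300x/(log x)⁸. -/
open Filter Asymptotics

open Real Set MeasureTheory intervalIntegral
open scoped Nat

/-!
Integrating by parts `N` times gives
`∫_a^b dt / log t = S_N b - S_N a + N! ∫_a^b dt / log^(N+1) t` with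
`S_N t = ∑_{k<N} k! t / log^(k+1) t`. The bound is `S_8 x + 1260 x / log^8 x`, whose derivative
`1 / log t + 1260 / log^8 t - 50400 / log^9 t` exceeds `1 / log t` once `log t ≥ 40`, so only
`x = 10^18` matters. There, with `N = 10`, the surplus `1260 x / log^8 x` has to absorb
`8! x / log^9 x + 9! x / log^10 x + 10! ∫_10^x dt / log^11 t`, with a margin of about 2%.
The last integral is split at powers of ten; where `log t > 11` it is compared with the derivative
`(1 - 11 / log t) / log^11 t` of `t / log^11 t`, which is sharp on short ranges of `log t`.
-/

noncomputable def logSeries (N : ℕ) (t : ℝ) : ℝ :=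
  ∑ k ∈ Finset.range N, k ! * (t / log t ^ (k + 1))

noncomputable def liMajorant (x : ℝ) : ℝ :=
  logSeries 8 x + 1260 * (x / log x ^ 8)

lemma intervalIntegrable_one_div_log_pow (m : ℕ) {a b : ℝ} (ha : 1 < a) (hb : 1 < b) :
    IntervalIntegrable (fun t => 1 / log t ^ m) volume a b := by
  have hpos : ∀ t ∈ uIcc a b, 0 < log t := fun t ht =>
    log_pos ((lt_inf_iff.2 ⟨ha, hb⟩).trans_le ht.1)
  refine ContinuousOn.intervalIntegrable
    (continuousOn_const.div (ContinuousOn.pow (fun t ht => ?_) m) fun t ht => ?_)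
  · exact (continuousAt_log fun h => by simpa [h] using hpos t ht).continuousWithinAt
  · exact (pow_pos (hpos t ht) m).ne'

lemma intervalIntegrable_one_div_log {a b : ℝ} (ha : 1 < a) (hb : 1 < b) :
    IntervalIntegrable (fun t => 1 / log t) volume a b := by
  simpa using intervalIntegrable_one_div_log_pow 1 ha hb

lemma integral_le_sub_of_hasDerivAt_of_le {f g g' : ℝ → ℝ} {a b : ℝ} (hab : a ≤ b)
    (hderiv : ∀ t ∈ Icc a b, HasDerivAt g (g' t) t) (hf : IntervalIntegrable f volume a b)
    (hfg : ∀ t ∈ Icc a b, f t ≤ g' t) :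
    ∫ t in a..b, f t ≤ g b - g a :=
  integral_le_sub_of_hasDeriv_right_of_le hab
    (fun t ht => (hderiv t ht).continuousAt.continuousWithinAt)
    (fun t ht => (hderiv t (Ioo_subset_Icc_self ht)).hasDerivWithinAt)
    ((intervalIntegrable_iff_integrableOn_Icc_of_le hab).1 hf)
    (fun t ht => hfg t (Ioo_subset_Icc_self ht))

lemma hasDerivAt_div_log_pow (n : ℕ) {t : ℝ} (ht : 1 < t) :
    HasDerivAt (fun s => s / log s ^ n) (1 / log t ^ n - n / log t ^ (n + 1)) t := by
  rcases n with _ | n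
  · simpa using hasDerivAt_id' t
  have hlog : log t ≠ 0 := (log_pos ht).ne'
  have hpow := (hasDerivAt_log (by linarith : t ≠ 0)).fun_pow (n + 1)
  rw [Nat.add_sub_cancel] at hpow
  refine ((hasDerivAt_id' t).div hpow (pow_ne_zero _ hlog)).congr_deriv ?_
  field_simp
  push_cast
  ring

lemma hasDerivAt_logSeries (N : ℕ) {t : ℝ} (ht : 1 < t) :
    HasDerivAt (logSeries N) (1 / log t - N ! / log t ^ (N + 1)) t := by
  induction N with
  | zero =>
    have hzero : logSeries 0 = fun _ => 0 := funext fun s => by simp [logSeries]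
    simpa [hzero] using hasDerivAt_const t (0 : ℝ)
  | succ N ih =>
    have hsplit : logSeries (N + 1) = fun s => logSeries N s + N ! * (s / log s ^ (N + 1)) := by
      funext s
      simp only [logSeries, Finset.sum_range_succ]
    rw [hsplit]
    refine (ih.add ((hasDerivAt_div_log_pow (N + 1) ht).const_mul (N ! : ℝ))).congr_deriv ?_
    push_cast [Nat.factorial_succ]
    ring

lemma integral_one_div_log_eq (N : ℕ) {a b : ℝ} (ha : 1 < a) (hb : 1 < b) :
    ∫ t in a..b, 1 / log t =
      logSeries N b - logSeries N a + N ! * ∫ t in a..b, 1 / log t ^ (N + 1) := by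
  have hint := intervalIntegrable_one_div_log ha hb
  have hrem := (intervalIntegrable_one_div_log_pow (N + 1) ha hb).const_mul (N ! : ℝ)
  have hderiv : ∀ t ∈ uIcc a b,
      HasDerivAt (logSeries N) (1 / log t - N ! * (1 / log t ^ (N + 1))) t := fun t ht => by
    rw [mul_one_div]
    exact hasDerivAt_logSeries N ((lt_inf_iff.2 ⟨ha, hb⟩).trans_le ht.1)
  have := integral_eq_sub_of_hasDerivAt hderiv (hint.sub hrem)
  rw [integral_sub hint hrem, intervalIntegral.integral_const_mul] at this
  linarith

lemma integral_one_div_log_pow_le_of_le_log (m : ℕ) {a b c : ℝ} (ha : 1 < a) (hab : a ≤ b)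
    (hc : 0 < c) (hca : c ≤ log a) :
    ∫ t in a..b, 1 / log t ^ m ≤ (b - a) / c ^ m := by
  calc ∫ t in a..b, 1 / log t ^ m ≤ ∫ _ in a..b, 1 / c ^ m := by
        refine integral_mono_on hab (intervalIntegrable_one_div_log_pow m ha (ha.trans_le hab))
          intervalIntegrable_const fun t ht => ?_
        have hct : c ≤ log t := hca.trans (log_le_log (by linarith) ht.1)
        exact one_div_le_one_div_of_le (pow_pos hc m) (pow_le_pow_left₀ hc.le hct m)
    _ = (b - a) / c ^ m := by rw [intervalIntegral.integral_const, smul_eq_mul, mul_one_div]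

lemma integral_one_div_log_pow_le_of_lt_log (m : ℕ) {a b c : ℝ} (ha : 1 < a) (hab : a ≤ b)
    (hmc : m < c) (hca : c ≤ log a) :
    ∫ t in a..b, 1 / log t ^ m ≤ (b / log b ^ m - a / log a ^ m) / (1 - m / c) := by
  have hc : 0 < c := (Nat.cast_nonneg m).trans_lt hmc
  have hmc' : 0 < 1 - m / c := by rw [sub_pos, div_lt_one hc]; exact hmc
  rw [sub_div]
  refine integral_le_sub_of_hasDerivAt_of_le (g := fun s => s / log s ^ m / (1 - m / c)) hab
    (fun t ht => (hasDerivAt_div_log_pow m (ha.trans_le ht.1)).div_const _)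
    (intervalIntegrable_one_div_log_pow m ha (ha.trans_le hab)) fun t ht => ?_
  have hct : c ≤ log t := hca.trans (log_le_log (by linarith) ht.1)
  have hlog : 0 < log t := hc.trans_le hct
  rw [le_div_iff₀ hmc']
  have hfactor : 1 / log t ^ m - m / log t ^ (m + 1) = 1 / log t ^ m * (1 - m / log t) := by
    field_simp
    ring
  rw [hfactor]
  gcongr

lemma log_ten_gt : 2.3025850926 < log 10 := by
  rw [log_ten_eq]; linarith [log_two_gt_d9, log_five_gt_d9]

lemma log_ten_lt : log 10 < 2.3025850934 := by
  rw [log_ten_eq]; linarith [log_two_lt_d9, log_five_lt_d9]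

lemma integral_one_div_log_pow_eleven_le :
    ∫ t in (10 : ℝ)..10 ^ 18, 1 / log t ^ 11 ≤ 2.35 := by
  have hten := log_ten_gt
  have hten' := log_ten_lt
  have one_lt_ten_pow (j : ℕ) (hj : j ≠ 0) : (1 : ℝ) < 10 ^ j :=
    one_lt_pow₀ (by norm_num) hj
  have split (i j k : ℕ) (hi : i ≠ 0 := by norm_num) (hj : j ≠ 0 := by norm_num)
      (hk : k ≠ 0 := by norm_num) :
      ∫ t in (10 : ℝ) ^ i..10 ^ k, 1 / log t ^ 11 =
        (∫ t in (10 : ℝ) ^ i..10 ^ j, 1 / log t ^ 11) +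
          ∫ t in (10 : ℝ) ^ j..10 ^ k, 1 / log t ^ 11 :=
    (integral_add_adjacent_intervals
      (intervalIntegrable_one_div_log_pow 11 (one_lt_ten_pow i hi) (one_lt_ten_pow j hj))
      (intervalIntegrable_one_div_log_pow 11 (one_lt_ten_pow j hj) (one_lt_ten_pow k hk))).symm
  have crude (j k : ℕ) (hj : j ≠ 0 := by norm_num) (hjk : j ≤ k := by norm_num) :
      ∫ t in (10 : ℝ) ^ j..10 ^ k, 1 / log t ^ 11 ≤
        ((10 : ℝ) ^ k - 10 ^ j) / (j * 2.3025850926) ^ 11 := by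
    refine integral_one_div_log_pow_le_of_le_log 11 (one_lt_ten_pow j hj)
      (pow_le_pow_right₀ (by norm_num) hjk) (by positivity) ?_
    rw [log_pow]
    gcongr
  have sharp (j k : ℕ) (hj : 5 ≤ j := by norm_num) (hjk : j ≤ k := by norm_num) :
      ∫ t in (10 : ℝ) ^ j..10 ^ k, 1 / log t ^ 11 ≤
        ((10 : ℝ) ^ k / (k * 2.3025850926) ^ 11 - 10 ^ j / (j * 2.3025850934) ^ 11) /
          (1 - 11 / (j * 2.3025850926)) := by
    have hj' : (5 : ℝ) ≤ j := by exact_mod_cast hj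
    have hk' : (5 : ℝ) ≤ k := by exact_mod_cast hj.trans hjk
    have hpos : 0 < 1 - 11 / (j * 2.3025850926 : ℝ) := by
      rw [sub_pos, div_lt_one (by positivity)]
      nlinarith
    refine (integral_one_div_log_pow_le_of_lt_log 11 (c := j * 2.3025850926)
      (one_lt_ten_pow j (by omega)) (pow_le_pow_right₀ (by norm_num) hjk)
      (by push_cast; nlinarith) ?_).trans ?_
    · rw [log_pow]
      gcongr
    · rw [log_pow, log_pow, Nat.cast_ofNat]
      gcongr
  nth_rw 1 [← pow_one (10 : ℝ)]
  rw [split 1 2 18, split 2 4 18, split 4 8 18, split 8 16 18, split 16 17 18]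
  calc _ ≤ _ := add_le_add (crude 1 2) <| add_le_add (crude 2 4) <| add_le_add (crude 4 8) <|
        add_le_add (sharp 8 16) <| add_le_add (sharp 16 17) (sharp 17 18)
    _ ≤ 2.35 := by norm_num

lemma hasDerivAt_liMajorant {t : ℝ} (ht : 1 < t) :
    HasDerivAt liMajorant (1 / log t + 1260 / log t ^ 8 - 50400 / log t ^ 9) t := by
  have hlog : log t ≠ 0 := (log_pos ht).ne'
  refine ((hasDerivAt_logSeries 8 ht).add
    ((hasDerivAt_div_log_pow 8 ht).const_mul 1260)).congr_deriv ?_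
  norm_num [Nat.factorial]
  field_simp
  ring

lemma integral_one_div_log_le_liMajorant_sub {a b : ℝ} (ha : 1 < a) (hab : a ≤ b)
    (h40 : 40 ≤ log a) :
    ∫ t in a..b, 1 / log t ≤ liMajorant b - liMajorant a := by
  refine integral_le_sub_of_hasDerivAt_of_le hab
    (fun t ht => hasDerivAt_liMajorant (ha.trans_le ht.1))
    (intervalIntegrable_one_div_log ha (ha.trans_le hab)) fun t ht => ?_
  have h40t : 40 ≤ log t := h40.trans (log_le_log (by linarith) ht.1)
  have hlog : 0 < log t := by linarith
  have hterm : 50400 / log t ^ 9 ≤ 1260 / log t ^ 8 := by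
    rw [div_le_div_iff₀ (by positivity) (by positivity), pow_succ]
    nlinarith [pow_pos hlog 8]
  linarith

lemma integral_one_div_log_le_liMajorant_ten_pow :
    ∫ t in (2 : ℝ)..10 ^ 18, 1 / log t ≤ liMajorant (10 ^ 18) := by
  rw [← integral_add_adjacent_intervals (b := 10) (intervalIntegrable_one_div_log (by norm_num)
    (by norm_num)) (intervalIntegrable_one_div_log (by norm_num) (by norm_num)),
    integral_one_div_log_eq 10 (a := 10) (b := 10 ^ 18) (by norm_num) (by norm_num)]
  have hhead : ∫ t in (2 : ℝ)..10, 1 / log t ≤ 12 := by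
    have := integral_one_div_log_pow_le_of_le_log 1 (b := 10) (c := 0.6931471803)
      (by norm_num) (by norm_num) (by norm_num) log_two_gt_d9.le
    norm_num at this ⊢
    linarith
  have hrem : (10 ! : ℝ) * ∫ t in (10 : ℝ)..10 ^ 18, 1 / log t ^ (10 + 1) ≤ 10 ! * 2.35 :=
    mul_le_mul_of_nonneg_left integral_one_div_log_pow_eleven_le (by positivity)
  have hseries : 0 ≤ logSeries 10 10 :=
    Finset.sum_nonneg fun k _ => by have := log_pos (by norm_num : (1 : ℝ) < 10); positivity
  have hmajorant : liMajorant (10 ^ 18) - logSeries 10 (10 ^ 18) =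
      1260 * (10 ^ 18 / log (10 ^ 18) ^ 8) - 40320 * (10 ^ 18 / log (10 ^ 18) ^ 9)
        - 362880 * (10 ^ 18 / log (10 ^ 18) ^ 10) := by
    simp only [liMajorant, logSeries, Finset.sum_range_succ, Nat.factorial]
    push_cast
    ring
  have hmargin : 12 + 10 ! * 2.35 ≤ 1260 * (10 ^ 18 / log (10 ^ 18) ^ 8)
      - 40320 * (10 ^ 18 / log (10 ^ 18) ^ 9) - 362880 * (10 ^ 18 / log (10 ^ 18) ^ 10) := by
    have hlo := log_ten_gt.le
    have hhi := log_ten_lt.le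
    rw [log_pow, Nat.cast_ofNat]
    calc (12 : ℝ) + 10 ! * 2.35 ≤ 1260 * (10 ^ 18 / (18 * 2.3025850934) ^ 8)
          - 40320 * (10 ^ 18 / (18 * 2.3025850926) ^ 9)
          - 362880 * (10 ^ 18 / (18 * 2.3025850926) ^ 10) := by
          norm_num [Nat.factorial]
      _ ≤ _ := by gcongr
  linarith

theorem li_upper_bound_1e18 (x : ℝ) (hx : 10 ^ 18 ≤ x) :
    (∫ t in (2:ℝ)..x, 1 / Real.log t) ≤
      x / Real.log x + x / Real.log x ^ 2 + 2 * x / Real.log x ^ 3 + 6 * x / Real.log x ^ 4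
        + 24 * x / Real.log x ^ 5 + 120 * x / Real.log x ^ 6 + 720 * x / Real.log x ^ 7
        + 6300 * x / Real.log x ^ 8 := by
  have hX : (1 : ℝ) < 10 ^ 18 := by norm_num
  have hlogX : 40 ≤ log ((10 : ℝ) ^ 18) := by
    rw [log_pow]; push_cast; linarith [log_ten_gt]
  have hmajorant : liMajorant x = x / log x + x / log x ^ 2 + 2 * x / log x ^ 3
      + 6 * x / log x ^ 4 + 24 * x / log x ^ 5 + 120 * x / log x ^ 6 + 720 * x / log x ^ 7
      + 6300 * x / log x ^ 8 := by
    simp only [liMajorant, logSeries, Finset.sum_range_succ, Nat.factorial]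
    push_cast
    ring
  rw [← hmajorant, ← integral_add_adjacent_intervals (b := 10 ^ 18)
    (intervalIntegrable_one_div_log (by norm_num) hX)
    (intervalIntegrable_one_div_log hX (hX.trans_le hx))]
  linarith [integral_one_div_log_le_liMajorant_ten_pow,
    integral_one_div_log_le_liMajorant_sub hX hx hlogX]
end
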